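/- arXiv:1309.2367 — 3 statements merged into one kernel-verified Lean document; each statement's English description precedes it below -/
import Mathlib

section
/- Let R be a Krull domain and 0 → L → M → N an exact sequence of R-lattices. Then 0 → L** → M** → N** is also exact, where (−)** denotes the double dual Hom_R(Hom_R(−,R),R). -/
open TensorProduct

universe u

def IsHeightOnePrime {R : Type u} [CommRing R] (P : Ideal R) : Prop :=
  P.IsPrime ∧ (∃ Q : Ideal R, Q.IsPrime ∧ Q < P) ∧
    ∀ Q₁ Q₂ : Ideal R, Q₁.IsPrime → Q₂.IsPrime → Q₁ < Q₂ → ¬ Q₂ < P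

def IsKrullDomain (R : Type u) [CommRing R] [IsDomain R] : Prop :=
  (∀ (P : Ideal R) [P.IsPrime], IsHeightOnePrime P →
    IsDiscreteValuationRing (Localization.AtPrime P)) ∧
  (∀ x : FractionRing R,
    (∀ P : Ideal R, IsHeightOnePrime P →
      ∃ a s : R, s ∉ P ∧ x * algebraMap R (FractionRing R) s = algebraMap R (FractionRing R) a) →
    ∃ r : R, algebraMap R (FractionRing R) r = x) ∧
  (∀ r : R, r ≠ 0 → {P : Ideal R | IsHeightOnePrime P ∧ r ∈ P}.Finite)

def IsLattice (R : Type u) (M : Type u) [CommRing R] [AddCommGroup M] [Module R M] : Prop :=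
  (∀ (a : R) (m : M), a • m = 0 → a = 0 ∨ m = 0) ∧
  ∃ (P : Type u) (_ : AddCommGroup P) (_ : Module R P) (_ : Module.Finite R P)
    (f : M →ₗ[R] P), Function.Injective f

/-!
Let `K` be the fraction field of `R`. It is an injective `R`-module and a `K`-valued functional
on a lattice has a common denominator, so a functional on `M` vanishing on `ker g` becomes, after
multiplication by some `b ≠ 0`, a functional on `N` composed with `g`. With `g = f` this makes
the cokernel of the restriction `M* → L*` torsion, so `f**` is injective. For `Φ ∈ M**` with
`g** Φ = 0` it shows that `Φ` vanishes on the kernel of the restriction, so `Φ` extends to a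
`K`-valued functional on `L*`. This extension is `R`-valued because `R = ⋂ R_P` over the
height-one primes `P`, and every `φ ∈ L*` has a multiple `s • φ` with `s ∉ P` extending to `M`:
`R_P` is a discrete valuation ring and `(M/L)_P` embeds in the torsion-free `N_P`, so `L_P` is a
direct summand of `M_P`.
-/

open IsLocalization LinearMap nonZeroDivisors

section FractionRing

variable {R : Type u} [CommRing R]

local notation "K" => FractionRing R

theorem FractionRing.exists_dual_of_forall_isInteger {M : Type*} [AddCommGroup M] [Module R M]
    (lam : M →ₗ[R] K) (h : ∀ m, IsInteger R (lam m)) :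
    ∃ χ : Module.Dual R M, Algebra.linearMap R K ∘ₗ χ = lam := by
  let e := LinearEquiv.ofInjective (Algebra.linearMap R K) (IsFractionRing.injective R K)
  have h' : ∀ m, lam m ∈ range (Algebra.linearMap R K) := fun m => by
    obtain ⟨r, hr⟩ := h m
    exact ⟨r, hr⟩
  refine ⟨e.symm ∘ₗ lam.codRestrict _ h', ?_⟩
  ext m
  exact congr_arg Subtype.val (e.apply_symm_apply ⟨lam m, h' m⟩)

variable [IsDomain R]

theorem FractionRing.baer : Module.Baer R K := by
  intro I g
  rcases eq_or_ne I ⊥ with rfl | hI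
  · refine ⟨0, fun x hx => ?_⟩
    rw [show (⟨x, hx⟩ : (⊥ : Ideal R)) = 0 from Subtype.ext ((Submodule.mem_bot R).1 hx)]
    simp
  obtain ⟨a, haI, ha0⟩ := Submodule.exists_mem_ne_zero_of_ne_bot hI
  refine ⟨((algebraMap R K a)⁻¹ * g ⟨a, haI⟩) • Algebra.linearMap R K, fun x hx => ?_⟩
  have hcross : algebraMap R K x * g ⟨a, haI⟩ = algebraMap R K a * g ⟨x, hx⟩ := by
    rw [← Algebra.smul_def, ← Algebra.smul_def, ← map_smul, ← map_smul]
    congr 1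
    ext
    simp [mul_comm]
  have ha : algebraMap R K a ≠ 0 := (map_ne_zero_iff _ (IsFractionRing.injective R K)).2 ha0
  simp only [LinearMap.smul_apply, Algebra.linearMap_apply, smul_eq_mul]
  field_simp
  rw [mul_comm, hcross]

theorem FractionRing.exists_comp_eq_of_ker_le {M N : Type*} [AddCommGroup M] [Module R M]
    [AddCommGroup N] [Module R N] (g : M →ₗ[R] N) (lam : M →ₗ[R] K) (h : ker g ≤ ker lam) :
    ∃ μ : N →ₗ[R] K, μ ∘ₗ g = lam := by
  obtain ⟨μ, hμ⟩ := FractionRing.baer.extension_property ((ker g).liftQ g le_rfl)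
    (ker_eq_bot.mp (Submodule.ker_liftQ_eq_bot _ _ _ le_rfl)) ((ker g).liftQ lam h)
  exact ⟨μ, by ext m; exact congr($hμ (Submodule.Quotient.mk m))⟩

end FractionRing

theorem LinearMap.dualMap_injective_of_forall_smul_mem_range {R X Y : Type*} [CommRing R]
    [IsDomain R] [AddCommGroup X] [Module R X] [AddCommGroup Y] [Module R Y] (i : Y →ₗ[R] X)
    (h : ∀ x, ∃ d : R, d ≠ 0 ∧ d • x ∈ range i) : Function.Injective i.dualMap := by
  refine (injective_iff_map_eq_zero _).2 fun Φ hΦ => ?_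
  ext x
  obtain ⟨d, hd, y, hy⟩ := h x
  have : d * Φ x = 0 := by
    rw [← smul_eq_mul, ← map_smul, ← hy]
    exact congr($hΦ y)
  exact (mul_eq_zero.1 this).resolve_left hd

theorem Function.Exact.exists_leftInverse_of_isPrincipalIdealRing {A L M N : Type*} [CommRing A]
    [IsDomain A] [IsPrincipalIdealRing A] [AddCommGroup L] [Module A L] [AddCommGroup M]
    [Module A M] [AddCommGroup N] [Module A N] [Module.Finite A M] [Module.IsTorsionFree A N]
    {f : L →ₗ[A] M} {g : M →ₗ[A] N} (hfg : Function.Exact f g) (hf : Function.Injective f) :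
    ∃ r : M →ₗ[A] L, r ∘ₗ f = LinearMap.id := by
  have hexact : Function.Exact f g.rangeRestrict := by
    rw [LinearMap.exact_iff, ker_rangeRestrict]
    exact LinearMap.exact_iff.1 hfg
  obtain ⟨l, hl⟩ := Module.projective_lifting_property g.rangeRestrict LinearMap.id
    g.surjective_rangeRestrict
  have hsplit := (hexact.split_tfae hf g.surjective_rangeRestrict).out 0 1
  exact hsplit.1 ⟨l, hl⟩

section Lattice

variable {R : Type u} [CommRing R]

theorem IsLattice.finite_localizedModule {M : Type u} [AddCommGroup M] [Module R M]
    (hM : IsLattice R M) (S : Submonoid R) [IsNoetherianRing (Localization S)] :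
    Module.Finite (Localization S) (LocalizedModule S M) := by
  obtain ⟨-, W, _, _, _, ι, hι⟩ := hM
  have : Module.Finite (Localization S) (LocalizedModule S W) :=
    Module.Finite.of_isLocalizedModule S (LocalizedModule.mkLinearMap S W)
  exact Module.Finite.of_injective _ (LocalizedModule.map_injective S ι hι)

variable [IsDomain R]

local notation "K" => FractionRing R

theorem IsLattice.isTorsionFree {M : Type u} [AddCommGroup M] [Module R M] (hM : IsLattice R M) :
    Module.IsTorsionFree R M :=
  Module.IsTorsionFree.of_smul_eq_zero hM.1

theorem IsLattice.exists_smul_isInteger {M : Type u} [AddCommGroup M] [Module R M]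
    (hM : IsLattice R M) (lam : M →ₗ[R] K) :
    ∃ d : R, d ≠ 0 ∧ ∀ m, IsInteger R (d • lam m) := by
  obtain ⟨-, W, _, _, _, ι, hι⟩ := hM
  obtain ⟨lam', hlam'⟩ := FractionRing.baer.extension_property ι hι lam
  have hfg : (range lam').FG := by
    rw [range_eq_map]
    exact Module.Finite.fg_top.map lam'
  obtain ⟨d, hd, hint⟩ := FractionalIdeal.isFractional_of_fg (S := R⁰) hfg
  refine ⟨d, nonZeroDivisors.ne_zero hd, fun m => ?_⟩
  rw [← hlam']
  exact hint _ (mem_range_self _ _)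

theorem IsLattice.exists_smul_mem_range_dualMap {M N : Type u} [AddCommGroup M] [Module R M]
    [AddCommGroup N] [Module R N] (hN : IsLattice R N) (g : M →ₗ[R] N) {ψ : Module.Dual R M}
    (hψ : ker g ≤ ker ψ) : ∃ b : R, b ≠ 0 ∧ b • ψ ∈ range g.dualMap := by
  obtain ⟨μ, hμ⟩ := FractionRing.exists_comp_eq_of_ker_le g (Algebra.linearMap R K ∘ₗ ψ)
    (hψ.trans (ker_le_ker_comp _ _))
  obtain ⟨b, hb, hint⟩ := hN.exists_smul_isInteger μ
  obtain ⟨χ, hχ⟩ := FractionRing.exists_dual_of_forall_isInteger (b • μ) hint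
  refine ⟨b, hb, χ, ?_⟩
  rw [dualMap_apply', ← cancel_left (f := Algebra.linearMap R K) (IsFractionRing.injective R K),
    ← comp_assoc, hχ, smul_comp, hμ, comp_smul]

theorem IsLattice.ker_dualMap_le_ker {L M N : Type u} [AddCommGroup L] [Module R L]
    [AddCommGroup M] [Module R M] [AddCommGroup N] [Module R N] (hN : IsLattice R N)
    {f : L →ₗ[R] M} {g : M →ₗ[R] N} (hfg : Function.Exact f g)
    {Φ : Module.Dual R (Module.Dual R M)} (hΦ : g.dualMap.dualMap Φ = 0) :
    ker f.dualMap ≤ ker Φ := by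
  intro ψ hψ
  have hgψ : ker g ≤ ker ψ := fun m hm => by
    obtain ⟨l, rfl⟩ := (hfg m).1 hm
    exact congr($hψ l)
  obtain ⟨b, hb, χ, hχ⟩ := hN.exists_smul_mem_range_dualMap g hgψ
  have : b * Φ ψ = 0 := by
    rw [← smul_eq_mul, ← map_smul, ← hχ]
    exact congr($hΦ χ)
  exact (mul_eq_zero.1 this).resolve_left hb

end Lattice

section Krull

variable {R : Type u} [CommRing R] [IsDomain R]

local notation "K" => FractionRing R

/-- `x ∈ R_P`, with the localization `R_P` seen inside `K`. -/
def IsIntegerAt (P : Ideal R) (x : K) : Prop :=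
  ∃ a s : R, s ∉ P ∧ x * algebraMap R K s = algebraMap R K a

theorem IsKrullDomain.isInteger (hR : IsKrullDomain R) {x : K}
    (hx : ∀ P : Ideal R, IsHeightOnePrime P → IsIntegerAt P x) : IsInteger R x :=
  hR.2.1 x hx

theorem IsKrullDomain.exists_comp_eq (hR : IsKrullDomain R) {X Y : Type*} [AddCommGroup X]
    [Module R X] [AddCommGroup Y] [Module R Y] (p : Y →ₗ[R] X) {Φ : Module.Dual R Y}
    (hΦ : ker p ≤ ker Φ)
    (h : ∀ (x : X) (Q : Ideal R), IsHeightOnePrime Q → ∃ s ∉ Q, s • x ∈ range p) :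
    ∃ Ψ : Module.Dual R X, Ψ ∘ₗ p = Φ := by
  obtain ⟨μ, hμ⟩ := FractionRing.exists_comp_eq_of_ker_le p (Algebra.linearMap R K ∘ₗ Φ)
    (hΦ.trans (ker_le_ker_comp _ _))
  have hint : ∀ x, IsInteger R (μ x) := fun x => hR.isInteger fun Q hQ => by
    obtain ⟨s, hs, y, hy⟩ := h x Q hQ
    refine ⟨Φ y, s, hs, ?_⟩
    rw [mul_comm, ← Algebra.smul_def, ← map_smul, ← hy]
    exact congr($hμ y)
  obtain ⟨Ψ, hΨ⟩ := FractionRing.exists_dual_of_forall_isInteger μ hint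
  refine ⟨Ψ, ?_⟩
  rw [← cancel_left (f := Algebra.linearMap R K) (IsFractionRing.injective R K), ← comp_assoc, hΨ,
    hμ]

theorem IsHeightOnePrime.not_le {P Q : Ideal R} (hP : IsHeightOnePrime P)
    (hQ : IsHeightOnePrime Q) (hne : P ≠ Q) : ¬ P ≤ Q := fun hle => by
  obtain ⟨hPprime, ⟨P₀, -, hP₀⟩, -⟩ := hP
  exact hQ.2.2 ⊥ P Ideal.isPrime_bot hPprime (bot_le.trans_lt hP₀) (lt_of_le_of_ne hle hne)

theorem exists_pow_mul_eq_mul_of_mem {P : Ideal R} [P.IsPrime]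
    [IsDiscreteValuationRing (Localization.AtPrime P)] {d t : R} (hd : d ≠ 0) (ht : t ∈ P) :
    ∃ (n : ℕ) (a t' : R), t' ∉ P ∧ t ^ n * t' = d * a := by
  set A := Localization.AtPrime P
  have hinj : Function.Injective (algebraMap R A) :=
    IsLocalization.injective A P.primeCompl_le_nonZeroDivisors
  obtain ⟨ϖ, hϖ⟩ := IsDiscreteValuationRing.exists_irreducible A
  obtain ⟨n, u, hu⟩ := IsDiscreteValuationRing.eq_unit_mul_pow_irreducible
    ((map_ne_zero_iff _ hinj).2 hd) hϖ
  have htm : algebraMap R A t ∈ IsLocalRing.maximalIdeal A :=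
    (IsLocalization.AtPrime.to_map_mem_maximal_iff A P t).mpr ht
  rw [hϖ.maximalIdeal_eq, Ideal.mem_span_singleton'] at htm
  obtain ⟨c, hc⟩ := htm
  have hpow : algebraMap R A (t ^ n) = (c ^ n * ↑u⁻¹) * algebraMap R A d := by
    rw [map_pow, ← hc, mul_pow, hu]
    linear_combination (-(c ^ n * ϖ ^ n)) * Units.inv_mul u
  obtain ⟨⟨a, t'⟩, ht'⟩ := IsLocalization.mk'_surjective P.primeCompl (c ^ n * (↑u⁻¹ : A))
  refine ⟨n, a, t', t'.2, hinj ?_⟩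
  rw [map_mul, map_mul, hpow, mul_assoc, mul_comm (algebraMap R A d), ← mul_assoc, ← ht',
    IsLocalization.mk'_spec, mul_comm]

theorem IsKrullDomain.exists_notMem_forall_mul_eq_mul (hR : IsKrullDomain R) {d : R}
    (hd : d ≠ 0) {Q : Ideal R} (hQ : IsHeightOnePrime Q) :
    ∃ s ∉ Q, ∀ P, IsHeightOnePrime P → P ≠ Q → ∃ a t : R, t ∉ P ∧ s * t = d * a := by
  have := hQ.1
  -- `s` has one factor `t ^ n`, with `t ∈ P \ Q` and `t ^ n ∈ d R_P`, for each of the finitely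
  -- many height-one primes `P ≠ Q` containing `d`.
  have hfinset : ∀ B : Finset (Ideal R), (∀ P ∈ B, IsHeightOnePrime P ∧ P ≠ Q) →
      ∃ s ∉ Q, ∀ P ∈ B, ∃ a t : R, t ∉ P ∧ s * t = d * a := by
    intro B
    induction B using Finset.induction_on with
    | empty => exact fun _ => ⟨1, Q.primeCompl.one_mem, by simp⟩
    | insert P B _ ih =>
      intro hB
      obtain ⟨s, hs, hsB⟩ := ih fun P' hP' => hB P' (Finset.mem_insert_of_mem hP')
      obtain ⟨hP, hPQ⟩ := hB P (Finset.mem_insert_self P B)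
      obtain ⟨t, htP, htQ⟩ := SetLike.not_le_iff_exists.mp (hP.not_le hQ hPQ)
      have := hP.1
      have := hR.1 P hP
      obtain ⟨n, a, t', ht', hpow⟩ := exists_pow_mul_eq_mul_of_mem hd htP
      refine ⟨s * t ^ n, Q.primeCompl.mul_mem hs (Q.primeCompl.pow_mem htQ n), fun P' hP' => ?_⟩
      rcases Finset.mem_insert.1 hP' with rfl | hP'
      · exact ⟨s * a, t', ht', by rw [mul_assoc, hpow]; ring⟩
      · obtain ⟨a', t'', ht'', hst⟩ := hsB P' hP'
        exact ⟨a' * t ^ n, t'', ht'', by rw [mul_right_comm, hst]; ring⟩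
  have hfin := hR.2.2 d hd
  obtain ⟨s, hs, hsB⟩ := hfinset (hfin.toFinset.erase Q) fun P hP =>
    ⟨(hfin.mem_toFinset.1 (Finset.mem_of_mem_erase hP)).1, Finset.ne_of_mem_erase hP⟩
  refine ⟨s, hs, fun P hP hPQ => ?_⟩
  by_cases hdP : d ∈ P
  · exact hsB P (Finset.mem_erase.2 ⟨hPQ, hfin.mem_toFinset.2 ⟨hP, hdP⟩⟩)
  · exact ⟨s, d, hdP, mul_comm s d⟩

theorem exists_extension_isIntegerAt {L M N : Type*} [AddCommGroup L] [Module R L]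
    [AddCommGroup M] [Module R M] [AddCommGroup N] [Module R N] [Module.IsTorsionFree R N]
    {Q : Ideal R} [Q.IsPrime] [IsDiscreteValuationRing (Localization.AtPrime Q)]
    [Module.Finite (Localization.AtPrime Q) (LocalizedModule Q.primeCompl M)]
    {f : L →ₗ[R] M} {g : M →ₗ[R] N} (hfg : Function.Exact f g) (hf : Function.Injective f)
    (φ : Module.Dual R L) :
    ∃ lam : M →ₗ[R] K, lam ∘ₗ f = Algebra.linearMap R K ∘ₗ φ ∧ ∀ m, IsIntegerAt Q (lam m) := by
  set S := Q.primeCompl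
  let fQ : LocalizedModule S L →ₗ[Localization.AtPrime Q] LocalizedModule S M :=
    LocalizedModule.map S f
  let gQ : LocalizedModule S M →ₗ[Localization.AtPrime Q] LocalizedModule S N :=
    LocalizedModule.map S g
  obtain ⟨r, hr⟩ := (show Function.Exact fQ gQ from LocalizedModule.map_exact S f g hfg
    ).exists_leftInverse_of_isPrincipalIdealRing (LocalizedModule.map_injective S f hf)
  have hker : ker (LocalizedModule.mkLinearMap S L) ≤ ker (Algebra.linearMap R K ∘ₗ φ) := by
    intro l hl
    obtain ⟨u, hu⟩ := (IsLocalizedModule.eq_zero_iff S _).1 hl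
    have hu0 : (u : R) ≠ 0 := fun h => u.2 (h ▸ Q.zero_mem)
    have hφ := congr(φ $hu)
    rw [Submonoid.smul_def, map_smul, map_zero, smul_eq_zero] at hφ
    simp [hφ.resolve_left hu0]
  obtain ⟨ν, hν⟩ := FractionRing.exists_comp_eq_of_ker_le _ _ hker
  refine ⟨ν ∘ₗ r.restrictScalars R ∘ₗ LocalizedModule.mkLinearMap S M, ?_, fun m => ?_⟩
  · ext l
    have hfl : LocalizedModule.mkLinearMap S M (f l) = fQ (LocalizedModule.mk l 1) :=
      (LocalizedModule.map_mk S f l 1).symm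
    simp only [comp_apply, restrictScalars_apply, hfl]
    rw [← comp_apply (f := r), hr, id_apply]
    exact congr($hν l)
  · simp only [comp_apply, restrictScalars_apply]
    generalize r (LocalizedModule.mkLinearMap S M m) = y
    induction y using LocalizedModule.induction_on with
    | h l u =>
      refine ⟨φ l, u, u.2, ?_⟩
      rw [mul_comm, ← Algebra.smul_def, ← map_smul, LocalizedModule.smul'_mk, ← Submonoid.smul_def,
        LocalizedModule.mk_cancel]
      exact congr($hν l)

theorem IsKrullDomain.exists_notMem_smul_mem_range_dualMap (hR : IsKrullDomain R)
    {L M N : Type u} [AddCommGroup L] [Module R L] [AddCommGroup M] [Module R M]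
    [AddCommGroup N] [Module R N] (hM : IsLattice R M) (hN : IsLattice R N)
    {f : L →ₗ[R] M} {g : M →ₗ[R] N} (hfg : Function.Exact f g) (hf : Function.Injective f)
    (φ : Module.Dual R L) {Q : Ideal R} (hQ : IsHeightOnePrime Q) :
    ∃ s ∉ Q, s • φ ∈ range f.dualMap := by
  have := hQ.1
  have := hR.1 Q hQ
  have := hN.isTorsionFree
  have := hM.finite_localizedModule Q.primeCompl
  obtain ⟨lam, hlam, hlamQ⟩ := exists_extension_isIntegerAt (Q := Q) hfg hf φ
  obtain ⟨d, hd, hdlam⟩ := hM.exists_smul_isInteger lam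
  obtain ⟨s, hsQ, hs⟩ := hR.exists_notMem_forall_mul_eq_mul hd hQ
  have hint : ∀ m, IsInteger R ((s • lam) m) := fun m => hR.isInteger fun P hP => by
    rw [LinearMap.smul_apply, Algebra.smul_def]
    obtain rfl | hPQ := eq_or_ne P Q
    · obtain ⟨a, t, ht, hat⟩ := hlamQ m
      exact ⟨s * a, t, ht, by rw [mul_assoc, hat, map_mul]⟩
    · obtain ⟨a, t, ht, hst⟩ := hs P hP hPQ
      obtain ⟨r, hr⟩ := hdlam m
      refine ⟨a * r, t, ht, ?_⟩
      rw [map_mul, hr, Algebra.smul_def, mul_right_comm, ← map_mul, hst, map_mul]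
      ring
  obtain ⟨ψ, hψ⟩ := FractionRing.exists_dual_of_forall_isInteger (s • lam) hint
  refine ⟨s, hsQ, ψ, ?_⟩
  rw [dualMap_apply', ← cancel_left (f := Algebra.linearMap R K) (IsFractionRing.injective R K),
    ← comp_assoc, hψ, smul_comp, hlam, comp_smul]

end Krull

theorem stmt9_general (R : Type u) (L M N : Type u) [CommRing R] [IsDomain R]
    [AddCommGroup L] [Module R L] [AddCommGroup M] [Module R M] [AddCommGroup N] [Module R N]
    (hR : IsKrullDomain R) (hM : IsLattice R M) (hN : IsLattice R N)
    (f : L →ₗ[R] M) (g : M →ₗ[R] N)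
    (hf : Function.Injective f) (hfg : Function.Exact f g) :
    Function.Injective (f.dualMap.dualMap) ∧
      Function.Exact (f.dualMap.dualMap) (g.dualMap.dualMap) := by
  refine ⟨dualMap_injective_of_forall_smul_mem_range _ fun φ => ?_, fun Φ => ⟨fun hΦ => ?_, ?_⟩⟩
  · exact hM.exists_smul_mem_range_dualMap f (by simp [ker_eq_bot.2 hf])
  · exact hR.exists_comp_eq f.dualMap (hN.ker_dualMap_le_ker hfg hΦ)
      fun φ Q hQ => hR.exists_notMem_smul_mem_range_dualMap hM hN hfg hf φ hQ
  · rintro ⟨Ψ, rfl⟩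
    ext χ
    show Ψ ((f.dualMap ∘ₗ g.dualMap) χ) = 0
    rw [dualMap_comp_dualMap, hfg.linearMap_comp_eq_zero, dualMap_apply', comp_zero, map_zero]

theorem stmt9 (R : Type u) (L M N : Type u) [CommRing R] [IsDomain R]
    [AddCommGroup L] [Module R L] [AddCommGroup M] [Module R M] [AddCommGroup N] [Module R N]
    (hR : IsKrullDomain R) (hL : IsLattice R L) (hM : IsLattice R M) (hN : IsLattice R N)
    (f : L →ₗ[R] M) (g : M →ₗ[R] N)
    (hf : Function.Injective f) (hfg : Function.Exact f g) :
    Function.Injective (f.dualMap.dualMap) ∧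
      Function.Exact (f.dualMap.dualMap) (g.dualMap.dualMap) :=
  stmt9_general R L M N hR hM hN f g hf hfg
end

section
/- Let R be a Krull domain, M an R-module whose torsion-free quotient is a lattice, and N a reflexive R-module. Then Hom_R(M, N) is a reflexive R-module. -/
open TensorProduct

universe u

def IsReflexive (R : Type u) (M : Type u) [CommRing R] [AddCommGroup M] [Module R M] : Prop :=
  IsLattice R M ∧ Function.Bijective (Module.Dual.eval R M)

/-!
Pick a finite `s ⊆ M` such that every `x : M` has a multiple `r • x`, `r ≠ 0`, in the span of `s`
(a maximal linearly independent set modulo torsion; it is finite because `M ⧸ torsion` embeds in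
a finite module). Since `N` is torsion-free and embeds in a finite module `Q`, the map
`f ↦ (f x)_{x ∈ s}` embeds `Hom(M, N)` into the finite module `Q^s`; hence `Hom(M, N)` is a
lattice. Every functional `ξ` on `Hom(M, N)` has a nonzero multiple that extends to `Q^s`
(extend over the fraction field, then clear denominators), so that multiple is a combination of
the functionals `f ↦ λ (f x)` with `λ ∈ N^*`. Reflexivity of `N` turns `Φ ∈ Hom(M, N)^**` into
`h : M → N` with `λ (h x) = Φ (f ↦ λ (f x))`, so `Φ` and evaluation at `h` agree on those
functionals, and therefore everywhere because `R` is a domain.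
-/

section

open Module Submodule
open scoped nonZeroDivisors

variable {R : Type*} [CommRing R]

section Lattice

variable [IsDomain R] {M N P : Type*} [AddCommGroup M] [Module R M] [AddCommGroup N] [Module R N]
  [AddCommGroup P] [Module R P]

instance LinearMap.isTorsionFree [IsTorsionFree R N] : IsTorsionFree R (M →ₗ[R] N) :=
  DFunLike.coe_injective.moduleIsTorsionFree _ fun _ _ => rfl

theorem exists_finite_forall_exists_smul_mem_span [Module.Finite R P]
    {f : M ⧸ torsion R M →ₗ[R] P} (hf : Function.Injective f) :
    ∃ s : Set M, s.Finite ∧ ∀ x : M, ∃ r ∈ R⁰, r • x ∈ span R s := by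
  obtain ⟨t, ht_ind, ht_max⟩ := exists_maximal_linearIndepOn R (torsion R M).mkQ
  have : Finite t := (ht_ind.map' f (LinearMap.ker_eq_bot.mpr hf)).finite
  refine ⟨t, Set.toFinite t, fun x => ?_⟩
  by_cases hx : x ∈ t
  · exact ⟨1, one_mem _, by simpa using subset_span hx⟩
  obtain ⟨a, ha, hax⟩ := ht_max x hx
  rw [← map_span] at hax
  obtain ⟨y, hy, hyx⟩ := hax
  have hxy : a • x - y ∈ torsion R M := by
    rw [← Submodule.Quotient.mk_eq_zero, Submodule.Quotient.mk_sub, Submodule.Quotient.mk_smul]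
    simpa [sub_eq_zero] using hyx.symm
  obtain ⟨b, hb⟩ := (mem_torsion_iff _).mp hxy
  have hbx : (b : R) • a • x = (b : R) • y :=
    sub_eq_zero.mp (by simpa [smul_sub, Submonoid.smul_def] using hb)
  refine ⟨b * a, mul_mem b.2 (mem_nonZeroDivisors_of_ne_zero ha), ?_⟩
  rw [mul_smul, hbx]
  exact smul_mem _ _ hy

theorem LinearMap.ext_of_forall_exists_smul_mem_span [IsTorsionFree R N] {s : Set M}
    (hs : ∀ x : M, ∃ r ∈ R⁰, r • x ∈ span R s) {f g : M →ₗ[R] N} (h : Set.EqOn f g s) :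
    f = g := by
  ext x
  obtain ⟨r, hr, hrx⟩ := hs x
  apply smul_right_injective N (nonZeroDivisors.ne_zero hr)
  simpa using LinearMap.eqOn_span h hrx

end Lattice

section Extension

theorem exists_dual_algebraLinearMap_comp_eq_smul {K W : Type*} [Field K] [Algebra R K]
    [IsFractionRing R K] [AddCommGroup W] [Module R W] [Module.Finite R W] (φ : W →ₗ[R] K) :
    ∃ s ∈ R⁰, ∃ φ' : Dual R W, Algebra.linearMap R K ∘ₗ φ' = s • φ := by
  have hfg : (LinearMap.range φ).FG := by
    rw [LinearMap.range_eq_map]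
    exact Module.Finite.fg_top.map φ
  obtain ⟨s, hs, hint⟩ := FractionalIdeal.isFractional_of_fg (S := R⁰) hfg
  have hmem (w : W) : (s • φ) w ∈ LinearMap.range (Algebra.linearMap R K) :=
    hint _ (LinearMap.mem_range_self φ w)
  let e := LinearEquiv.ofInjective (Algebra.linearMap R K) (IsFractionRing.injective R K)
  refine ⟨s, hs, e.symm.toLinearMap ∘ₗ (s • φ).codRestrict _ hmem, LinearMap.ext fun w => ?_⟩
  exact congrArg Subtype.val (e.apply_symm_apply ⟨_, hmem w⟩)

theorem Module.Dual.exists_comp_eq_smul_of_injective [IsDomain R] {L W : Type*}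
    [AddCommGroup L] [Module R L] [AddCommGroup W] [Module R W] [Module.Finite R W]
    {j : L →ₗ[R] W} (hj : Function.Injective j) (ξ : Dual R L) :
    ∃ s ∈ R⁰, ∃ ξ' : Dual R W, ξ' ∘ₗ j = s • ξ := by
  have hjK : Function.Injective (j.baseChange (FractionRing R)) := by
    rw [LinearMap.baseChange_eq_ltensor]
    exact Module.Flat.lTensor_preserves_injective_linearMap j hj
  obtain ⟨g, hg⟩ :=
    (j.baseChange (FractionRing R)).exists_leftInverse_of_injective (LinearMap.ker_eq_bot.mpr hjK)
  obtain ⟨s, hs, ξ', hξ'⟩ := exists_dual_algebraLinearMap_comp_eq_smul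
    ((ξ.baseChange (FractionRing R) ∘ₗ g).restrictScalars R ∘ₗ TensorProduct.mk R _ W 1)
  refine ⟨s, hs, ξ', LinearMap.ext fun x => IsFractionRing.injective R (FractionRing R) ?_⟩
  have hgj : g (1 ⊗ₜ j x) = 1 ⊗ₜ x := by simpa using LinearMap.congr_fun hg (1 ⊗ₜ x)
  have h := LinearMap.congr_fun hξ' (j x)
  rw [LinearMap.comp_apply, LinearMap.smul_apply, LinearMap.comp_apply,
    LinearMap.restrictScalars_apply, TensorProduct.mk_apply, LinearMap.comp_apply, hgj,
    Dual.baseChange_apply_tmul] at h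
  rw [LinearMap.comp_apply, LinearMap.smul_apply, smul_eq_mul, map_mul, ← Algebra.linearMap_apply,
    h, Algebra.smul_def, Algebra.smul_def, mul_one]

end Extension

section Evaluation

variable (R) (M N : Type*) [AddCommGroup M] [Module R M] [AddCommGroup N] [Module R N]

def evaluationSpan : Submodule R (Dual R (M →ₗ[R] N)) :=
  span R (Set.range fun p : Dual R N × M => p.1 ∘ₗ LinearMap.applyₗ p.2)

variable {R M N}

theorem dual_eval_linearMap_injective (h : Function.Injective (Dual.eval R N)) :
    Function.Injective (Dual.eval R (M →ₗ[R] N)) := by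
  refine (injective_iff_map_eq_zero _).mpr fun f hf => LinearMap.ext fun x => ?_
  refine (injective_iff_map_eq_zero _).mp h _ (LinearMap.ext fun l => ?_)
  exact LinearMap.congr_fun hf (l ∘ₗ LinearMap.applyₗ x)

theorem exists_eqOn_evaluationSpan [IsReflexive R N] (Φ : Dual R (Dual R (M →ₗ[R] N))) :
    ∃ h : M →ₗ[R] N, Set.EqOn Φ (Dual.eval R _ h) (evaluationSpan R M N) := by
  let T : M →ₗ[R] Dual R N →ₗ[R] Dual R (M →ₗ[R] N) :=
    (LinearMap.llcomp R (M →ₗ[R] N) N R).flip ∘ₗ LinearMap.applyₗ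
  refine ⟨(evalEquiv R N).symm.toLinearMap ∘ₗ LinearMap.llcomp R _ _ R Φ ∘ₗ T,
    fun ξ hξ => LinearMap.eqOn_span ?_ hξ⟩
  rintro _ ⟨⟨l, x⟩, rfl⟩
  exact (apply_evalEquiv_symm_apply R N l (Φ ∘ₗ T x)).symm

theorem dual_eval_linearMap_surjective [IsDomain R] [IsReflexive R N]
    (hD : ∀ ξ, ∃ s ∈ R⁰, s • ξ ∈ evaluationSpan R M N) :
    Function.Surjective (Dual.eval R (M →ₗ[R] N)) := by
  intro Φ
  obtain ⟨h, hΦ⟩ := exists_eqOn_evaluationSpan Φ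
  refine ⟨h, LinearMap.ext fun ξ => ?_⟩
  obtain ⟨s, hs, hsξ⟩ := hD ξ
  apply mul_left_cancel₀ (nonZeroDivisors.ne_zero hs)
  simpa using (hΦ hsξ).symm

end Evaluation

section TestSet

variable [IsDomain R] {M N Q : Type*} [AddCommGroup M] [Module R M] [AddCommGroup N] [Module R N]
  [AddCommGroup Q] [Module R Q] [IsTorsionFree R N] {s : Set M}

theorem LinearMap.injective_pi_comp_applyₗ (hs : ∀ x : M, ∃ r ∈ R⁰, r • x ∈ span R s)
    {g : N →ₗ[R] Q} (hg : Function.Injective g) :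
    Function.Injective
      (LinearMap.pi fun x => g ∘ₗ LinearMap.applyₗ (x : M) : (M →ₗ[R] N) →ₗ[R] s → Q) :=
  fun _ _ h => LinearMap.ext_of_forall_exists_smul_mem_span hs fun x hx => hg (congr_fun h ⟨x, hx⟩)

theorem exists_smul_mem_evaluationSpan [Finite s] [Module.Finite R Q]
    (hs : ∀ x : M, ∃ r ∈ R⁰, r • x ∈ span R s) {g : N →ₗ[R] Q} (hg : Function.Injective g)
    (ξ : Dual R (M →ₗ[R] N)) : ∃ r ∈ R⁰, r • ξ ∈ evaluationSpan R M N := by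
  classical
  have := Fintype.ofFinite s
  obtain ⟨r, hr, ξ', hξ'⟩ :=
    Module.Dual.exists_comp_eq_smul_of_injective (LinearMap.injective_pi_comp_applyₗ hs hg) ξ
  have hξ'_sum : ξ' ∘ₗ (LinearMap.pi fun x => g ∘ₗ LinearMap.applyₗ (x : M)) =
      ∑ x, (ξ' ∘ₗ LinearMap.single R (fun _ => Q) x ∘ₗ g) ∘ₗ LinearMap.applyₗ (x : M) := by
    ext f
    simp [← map_sum, Finset.univ_sum_single, LinearMap.pi]
  refine ⟨r, hr, ?_⟩
  rw [← hξ', hξ'_sum]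
  exact sum_mem fun x _ => subset_span ⟨(_, x), rfl⟩

end TestSet

end

theorem stmt12_general (R : Type u) (M N : Type u) [CommRing R] [IsDomain R]
    [AddCommGroup M] [Module R M] [AddCommGroup N] [Module R N]
    (hM : IsLattice R (M ⧸ Submodule.torsion R M))
    (hN : IsReflexive R N) :
    IsReflexive R (M →ₗ[R] N) := by
  obtain ⟨⟨hN_tf, Q, _, _, _, g, hg⟩, hN_eval⟩ := hN
  obtain ⟨-, P, _, _, _, f, hf⟩ := hM
  have : Module.IsTorsionFree R N := .of_smul_eq_zero hN_tf
  have : Module.IsReflexive R N := ⟨hN_eval⟩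
  obtain ⟨s, hs_fin, hs⟩ := exists_finite_forall_exists_smul_mem_span hf
  have := hs_fin.to_subtype
  refine ⟨⟨fun _ _ => smul_eq_zero.mp, s → Q, inferInstance, inferInstance, inferInstance, _,
    LinearMap.injective_pi_comp_applyₗ hs hg⟩, dual_eval_linearMap_injective hN_eval.1,
    dual_eval_linearMap_surjective (exists_smul_mem_evaluationSpan hs hg)⟩

theorem stmt12 (R : Type u) (M N : Type u) [CommRing R] [IsDomain R]
    [AddCommGroup M] [Module R M] [AddCommGroup N] [Module R N]
    (hR : IsKrullDomain R)
    (hM : IsLattice R (M ⧸ Submodule.torsion R M))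
    (hN : IsReflexive R N) :
    IsReflexive R (M →ₗ[R] N) :=
  stmt12_general R M N hM hN
end

section
/- Let R be a Krull domain, and M, N R-modules whose torsion-free quotients are lattices. Then the canonical map (M ⊗_R N)** → (M** ⊗_R N)** is an isomorphism. -/
open TensorProduct

universe u

/-! Hom–tensor adjunction identifies the dual of `X ⊗ N` with `Hom(N, X*)`, so the dual of
`ev ⊗ N` is bijective as soon as the dual `M*** → M*` of the evaluation `ev : M → M**` is.
That map is split surjective by evaluation on `M*`. It is injective because `M**/ev(M)` is torsion:
a functional on `M` is determined by its values on a finite set `I` (a maximal independent subset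
of `M/tor`, finite because `M/tor` embeds into a finite module), so `M*` embeds into `R^I`; over
the fraction field every functional on `M*` extends to `R^I`, and clearing denominators shows
that a nonzero multiple of it is evaluation at an element of `M`. -/

open Module

theorem Module.Dual.torsion_le_ker {R M : Type*} [CommRing R] [IsDomain R] [AddCommGroup M]
    [Module R M] (f : Dual R M) : Submodule.torsion R M ≤ LinearMap.ker f := by
  intro x hx
  obtain ⟨s, hs⟩ := (Submodule.mem_torsion_iff x).mp hx
  have : (s : R) * f x = 0 := by
    rw [← smul_eq_mul, ← map_smul, ← Submonoid.smul_def, hs, map_zero]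
  exact (mul_eq_zero.mp this).resolve_left (nonZeroDivisors.coe_ne_zero s)

theorem Module.exists_finite_set_dual_eq_zero_of_forall_eq_zero {R M P : Type*} [CommRing R]
    [IsDomain R] [AddCommGroup M] [Module R M] [AddCommGroup P] [Module R P] [Module.Finite R P]
    {g : M ⧸ Submodule.torsion R M →ₗ[R] P} (hg : Function.Injective g) :
    ∃ I : Set M, I.Finite ∧ ∀ f : Dual R M, (∀ x ∈ I, f x = 0) → f = 0 := by
  obtain ⟨I, hI, hmax⟩ := exists_maximal_linearIndepOn R (Submodule.torsion R M).mkQ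
  refine ⟨I, Set.finite_coe_iff.mp (hI.map' g (LinearMap.ker_eq_bot.mpr hg)).finite, ?_⟩
  intro f hf
  let f' := (Submodule.torsion R M).liftQ f f.torsion_le_ker
  have hspan : Submodule.span R ((Submodule.torsion R M).mkQ '' I) ≤ LinearMap.ker f' := by
    rw [Submodule.span_le]
    rintro _ ⟨y, hy, rfl⟩
    simpa [f'] using hf y hy
  ext x
  by_cases hx : x ∈ I
  · exact hf x hx
  obtain ⟨a, ha, hax⟩ := hmax x hx
  have : a * f x = 0 := by simpa [f'] using hspan hax
  exact (mul_eq_zero.mp this).resolve_left ha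

theorem LinearMap.exists_algebraMap_comp_eq_smul {R : Type*} [CommRing R] [IsDomain R]
    {ι : Type*} [Fintype ι] (g : (ι → R) →ₗ[R] FractionRing R) :
    ∃ s : R, s ≠ 0 ∧
      ∃ l : Dual R (ι → R), Algebra.linearMap R (FractionRing R) ∘ₗ l = s • g := by
  classical
  obtain ⟨s, hs⟩ := IsLocalization.exist_integer_multiples_of_finite (nonZeroDivisors R)
    fun i => g (Pi.single i 1)
  choose a ha using hs
  refine ⟨s, nonZeroDivisors.coe_ne_zero s, ∑ i, a i • LinearMap.proj i, ?_⟩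
  refine LinearMap.pi_ext' fun i => LinearMap.ext_ring ?_
  simp [ha, Pi.single_apply]

theorem LinearMap.exists_smul_mem_range_dualMap {R : Type*} [CommRing R] [IsDomain R]
    {ι T : Type*} [Fintype ι] [AddCommGroup T] [Module R T] {Φ : T →ₗ[R] ι → R}
    (hΦ : Function.Injective Φ) (ξ : Dual R T) :
    ∃ s : R, s ≠ 0 ∧ s • ξ ∈ range Φ.dualMap := by
  let S := nonZeroDivisors R
  let K := FractionRing R
  let ΦK := IsLocalizedModule.mapExtendScalars S (LocalizedModule.mkLinearMap S T)
    (LocalizedModule.mkLinearMap S (ι → R)) K Φ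
  let ξK := IsLocalizedModule.mapExtendScalars S (LocalizedModule.mkLinearMap S T)
    (Algebra.linearMap R K) K ξ
  obtain ⟨ρ, hρ⟩ := ΦK.exists_leftInverse_of_injective (LinearMap.ker_eq_bot.mpr
    (LocalizedModule.map_injective S Φ hΦ))
  obtain ⟨s, hs, l, hl⟩ := exists_algebraMap_comp_eq_smul
    (((ξK ∘ₗ ρ).restrictScalars R) ∘ₗ LocalizedModule.mkLinearMap S (ι → R))
  refine ⟨s, hs, l, ?_⟩
  ext t
  apply IsFractionRing.injective R K
  have hΦK :
      ΦK (LocalizedModule.mkLinearMap S T t) =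
        LocalizedModule.mkLinearMap S (ι → R) (Φ t) := by
    simp only [ΦK, IsLocalizedModule.mapExtendScalars_apply_apply, IsLocalizedModule.map_apply]
  have hξK : ξK (LocalizedModule.mkLinearMap S T t) = algebraMap R K (ξ t) := by
    simp only [ξK, IsLocalizedModule.mapExtendScalars_apply_apply, IsLocalizedModule.map_apply]
    rfl
  calc algebraMap R K (l (Φ t))
      = s • ξK (ρ (ΦK (LocalizedModule.mkLinearMap S T t))) := by
        rw [hΦK]; exact congr($hl (Φ t))
    _ = s • ξK (LocalizedModule.mkLinearMap S T t) := by
      rw [← LinearMap.comp_apply ρ, hρ, LinearMap.id_apply]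
    _ = algebraMap R K ((s • ξ) t) := by
      rw [hξK, LinearMap.smul_apply, smul_eq_mul, map_mul, Algebra.smul_def]

theorem Module.Dual.exists_smul_mem_range_eval {R M P : Type*} [CommRing R] [IsDomain R]
    [AddCommGroup M] [Module R M] [AddCommGroup P] [Module R P] [Module.Finite R P]
    {g : M ⧸ Submodule.torsion R M →ₗ[R] P} (hg : Function.Injective g)
    (ξ : Dual R (Dual R M)) :
    ∃ s : R, s ≠ 0 ∧ s • ξ ∈ LinearMap.range (Dual.eval R M) := by
  classical
  obtain ⟨I, hIfin, hI⟩ := exists_finite_set_dual_eq_zero_of_forall_eq_zero hg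
  have := hIfin.fintype
  let Φ : Dual R M →ₗ[R] I → R := LinearMap.pi fun x => Dual.eval R M x
  have hΦ : Function.Injective Φ := by
    refine (injective_iff_map_eq_zero Φ).mpr fun f hf => hI f fun x hx => ?_
    exact congr_fun hf ⟨x, hx⟩
  obtain ⟨s, hs, l, hl⟩ := LinearMap.exists_smul_mem_range_dualMap hΦ ξ
  refine ⟨s, hs, ∑ x : I, l (Pi.single x 1) • (x : M), ?_⟩
  ext f
  rw [← hl, LinearMap.dualMap_apply, Dual.eval_apply]
  conv_rhs => rw [← Finset.univ_sum_single (Φ f)]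
  simp only [map_sum, map_smul, smul_eq_mul]
  refine Finset.sum_congr rfl fun x _ => ?_
  rw [mul_comm, ← smul_eq_mul, ← map_smul, ← Pi.single_smul', smul_eq_mul, mul_one]
  rfl

theorem LinearMap.dualMap_injective_of_forall_exists_smul_mem_range {R A B : Type*} [CommRing R]
    [IsDomain R] [AddCommGroup A] [Module R A] [AddCommGroup B] [Module R B] {f : A →ₗ[R] B}
    (hf : ∀ b, ∃ s : R, s ≠ 0 ∧ s • b ∈ range f) : Function.Injective f.dualMap := by
  refine (injective_iff_map_eq_zero _).mpr fun φ hφ => ?_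
  ext b
  obtain ⟨s, hs, a, ha⟩ := hf b
  have : s * φ b = 0 := by rw [← smul_eq_mul, ← map_smul, ← ha]; exact congr($hφ a)
  exact (mul_eq_zero.mp this).resolve_left hs

theorem Module.Dual.eval_dualMap_bijective {R M P : Type*} [CommRing R] [IsDomain R]
    [AddCommGroup M] [Module R M] [AddCommGroup P] [Module R P] [Module.Finite R P]
    {g : M ⧸ Submodule.torsion R M →ₗ[R] P} (hg : Function.Injective g) :
    Function.Bijective (Dual.eval R M).dualMap :=
  ⟨LinearMap.dualMap_injective_of_forall_exists_smul_mem_range (exists_smul_mem_range_eval hg),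
    fun φ => ⟨Dual.eval R (Dual R M) φ, rfl⟩⟩

def TensorProduct.dualEquivHomDual (R X N : Type*) [CommRing R] [AddCommGroup X] [Module R X]
    [AddCommGroup N] [Module R N] : Dual R (X ⊗[R] N) ≃ₗ[R] (N →ₗ[R] Dual R X) :=
  (TensorProduct.comm R N X).dualMap ≪≫ₗ (lift.equiv (.id R) N X R).symm

theorem LinearMap.dualMap_rTensor_bijective {R A B : Type*} (N : Type*) [CommRing R]
    [AddCommGroup A] [Module R A] [AddCommGroup B] [Module R B] [AddCommGroup N] [Module R N]
    {f : A →ₗ[R] B} (hf : Function.Bijective f.dualMap) :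
    Function.Bijective (f.rTensor N).dualMap := by
  let E := dualEquivHomDual R B N ≪≫ₗ (LinearEquiv.ofBijective _ hf).congrRight ≪≫ₗ
    (dualEquivHomDual R A N).symm
  have hE : ⇑(f.rTensor N).dualMap = E := by
    ext φ : 1
    apply (dualEquivHomDual R A N).injective
    simp only [E, LinearEquiv.trans_apply, LinearEquiv.apply_symm_apply]
    rfl
  exact hE ▸ E.bijective

theorem stmt13_general (R : Type u) (M N : Type u) [CommRing R] [IsDomain R]
    [AddCommGroup M] [Module R M] [AddCommGroup N] [Module R N]
    (hM : IsLattice R (M ⧸ Submodule.torsion R M)) :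
    Function.Bijective
      (((LinearMap.rTensor N (Module.Dual.eval R M)).dualMap).dualMap) := by
  obtain ⟨-, P, _, _, _, g, hg⟩ := hM
  exact (LinearEquiv.ofBijective _
    (LinearMap.dualMap_rTensor_bijective N (Dual.eval_dualMap_bijective hg))).dualMap.bijective

theorem stmt13 (R : Type u) (M N : Type u) [CommRing R] [IsDomain R]
    [AddCommGroup M] [Module R M] [AddCommGroup N] [Module R N]
    (hR : IsKrullDomain R)
    (hM : IsLattice R (M ⧸ Submodule.torsion R M))
    (hN : IsLattice R (N ⧸ Submodule.torsion R N)) :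
    Function.Bijective
      (((LinearMap.rTensor N (Module.Dual.eval R M)).dualMap).dualMap) :=
  stmt13_general R M N hM
end
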